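/- For all natural numbers n ≥ k ≥ 0, the Stirling number of the second kind satisfies S(n,k) = C(n,k) · b_{n−k}^{(−k)}, where b_j^{(−k)} := j!·[t^j] ((e^t−1)/t)^k are the generalized Bernoulli numbers of negative order −k. -/

import Mathlib

/-- Stirling numbers of the second kind. -/
def stirling2 : ℕ → ℕ → ℕ
  | 0, 0 => 1
  | 0, _ + 1 => 0
  | _ + 1, 0 => 0
  | n + 1, k + 1 => (k + 1) * stirling2 n (k + 1) + stirling2 n k

/-- `(e^t-1)/t = Σ_{m≥0} t^m/(m+1)!` as a formal power series over `ℚ`. -/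
noncomputable def expSubOneDivT : PowerSeries ℚ :=
  PowerSeries.mk fun m => (1 : ℚ) / (m + 1).factorial

/-- The generalized Bernoulli numbers of negative order:
`b_j^{(-k)} = j!·[t^j]((e^t-1)/t)^k`. -/
noncomputable def bernoulliNegOrder (j k : ℕ) : ℚ :=
  (j.factorial : ℚ) * PowerSeries.coeff j (expSubOneDivT ^ k)

/-!
`(e^t - 1)^k` is the exponential generating function of `S(·, k)`, scaled by `k!`: differentiating
`(e^t - 1)^(k+1)` gives `(k+1)((e^t - 1)^(k+1) + (e^t - 1)^k)`, which on coefficients is the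
recurrence `S(n+1, k+1) = (k+1) S(n, k+1) + S(n, k)`. Dividing by `t^k` shifts coefficients by `k`,
so `b_{n-k}^{(-k)} = (n-k)! k! S(n, k) / n!`.
-/

open Nat PowerSeries

theorem stirling2_eq_stirlingSecond (n k : ℕ) : stirling2 n k = stirlingSecond n k := by
  induction n generalizing k with
  | zero => cases k <;> rfl
  | succ n ih =>
    cases k with
    | zero => rfl
    | succ k => rw [stirling2, stirlingSecond_succ_succ, ih, ih]

section ExpSubOne

variable (A : Type*) [CommRing A] [Algebra ℚ A]

theorem PowerSeries.derivative_exp_sub_one_pow_succ (k : ℕ) :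
    d⁄dX A ((exp A - 1) ^ (k + 1)) = (k + 1) • ((exp A - 1) ^ (k + 1) + (exp A - 1) ^ k) := by
  rw [Derivation.leibniz_pow, map_sub, derivative_exp, Derivation.map_one_eq_zero, sub_zero,
    Nat.add_sub_cancel, smul_eq_mul, pow_succ, ← _root_.mul_add_one, sub_add_cancel]

theorem PowerSeries.factorial_mul_coeff_exp_sub_one_pow (n k : ℕ) :
    (n ! : A) * coeff n ((exp A - 1) ^ k) = k ! * stirlingSecond n k := by
  induction n generalizing k with
  | zero => cases k <;> simp [coeff_zero_eq_constantCoeff_apply]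
  | succ n ih =>
    cases k with
    | zero => simp [coeff_one]
    | succ k =>
      calc ((n + 1)! : A) * coeff (n + 1) ((exp A - 1) ^ (k + 1))
          = n ! * coeff n (d⁄dX A ((exp A - 1) ^ (k + 1))) := by
            rw [coeff_derivative, factorial_succ]; push_cast; ring
        _ = (k + 1) *
              (n ! * coeff n ((exp A - 1) ^ (k + 1)) + n ! * coeff n ((exp A - 1) ^ k)) := by
            rw [derivative_exp_sub_one_pow_succ, map_nsmul, map_add, nsmul_eq_mul]; push_cast; ring
        _ = (k + 1)! * stirlingSecond (n + 1) (k + 1) := by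
            rw [ih, ih, stirlingSecond_succ_succ, factorial_succ]; push_cast; ring

end ExpSubOne

theorem expSubOneDivT_mul_X : expSubOneDivT * X = exp ℚ - 1 := by
  ext (_ | n)
  · simp
  · simp [expSubOneDivT, coeff_exp, coeff_one]

theorem coeff_expSubOneDivT_pow (j k : ℕ) :
    coeff j (expSubOneDivT ^ k) = coeff (j + k) ((exp ℚ - 1) ^ k) := by
  rw [← expSubOneDivT_mul_X, mul_pow, coeff_mul_X_pow]

/-- `S(n,k) = C(n,k)·b_{n-k}^{(-k)}` for `n ≥ k ≥ 0`. -/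
theorem stirling2_eq_choose_mul_bernoulliNegOrder (n k : ℕ) (hkn : k ≤ n) :
    (stirling2 n k : ℚ) = (n.choose k : ℚ) * bernoulliNegOrder (n - k) k := by
  have hchoose : (n.choose k : ℚ) * k ! * (n - k)! = n ! := by
    exact_mod_cast choose_mul_factorial_mul_factorial hkn
  rw [bernoulliNegOrder, coeff_expSubOneDivT_pow, Nat.sub_add_cancel hkn,
    stirling2_eq_stirlingSecond]
  apply mul_left_cancel₀ (show (k ! : ℚ) ≠ 0 by positivity)
  calc (k ! : ℚ) * stirlingSecond n k = n ! * coeff n ((exp ℚ - 1) ^ k) :=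
        (factorial_mul_coeff_exp_sub_one_pow ℚ n k).symm
    _ = k ! * (n.choose k * ((n - k)! * coeff n ((exp ℚ - 1) ^ k))) := by
        rw [← hchoose]; ring
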